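/- arXiv:1701.07418 — 2 statements merged into one kernel-verified Lean document; each statement's English description precedes it below -/
import Mathlib

section
/- (Caccioppoli-type inequality.) Let $f$ be a smooth real function on an open set $U \subseteq \mathbb{C}$, $n \in \mathbb{Z}^{+}$, with $n|\partial f/\partial \bar z|^2 + \partial^2 f/\partial z \partial \bar z \le 0$ on $U$. Let $\chi \in C_c^\infty(U)$ be real-valued. Then $\displaystyle n^2 \int_U \chi^2 \left|\frac{\partial f}{\partial \bar z}\right|^2 dA \le 4 \int_U \left|\frac{\partial \chi}{\partial z}\right|^2 dA.$ -/
/-- ∂/∂x on ℂ ≅ ℝ². -/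
noncomputable def pdx (u : ℂ → ℂ) (z : ℂ) : ℂ := fderiv ℝ u z 1

/-- ∂/∂y on ℂ ≅ ℝ². -/
noncomputable def pdy (u : ℂ → ℂ) (z : ℂ) : ℂ := fderiv ℝ u z Complex.I

/-- Wirtinger derivative ∂/∂z. -/
noncomputable def wz (u : ℂ → ℂ) (z : ℂ) : ℂ := (pdx u z - Complex.I * pdy u z) / 2

/-- Wirtinger derivative ∂/∂z̄. -/
noncomputable def wzbar (u : ℂ → ℂ) (z : ℂ) : ℂ := (pdx u z + Complex.I * pdy u z) / 2

/-- ∂²/∂z∂z̄. -/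
noncomputable def lap (u : ℂ → ℂ) (z : ℂ) : ℂ := wz (fun w => wzbar u w) z

/-- Coerce a real-valued function to a complex-valued one. -/
noncomputable def cx (u : ℂ → ℝ) : ℂ → ℂ := fun z => ((u z : ℝ) : ℂ)

open MeasureTheory

private lemma zero_nhds {K : Set ℂ} (hK : IsClosed K) {M : Type*} [Zero M]
    {p : ℂ → M} (h2 : ∀ z ∉ K, p z = 0) {z : ℂ} (hz : z ∉ K) :
    p =ᶠ[nhds z] (fun _ => 0) := by
  filter_upwards [hK.isOpen_compl.mem_nhds hz] with y hy using h2 y hy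

private lemma cont_glue {U K : Set ℂ} (hU : IsOpen U) (hK : IsClosed K) (hKU : K ⊆ U)
    {M : Type*} [TopologicalSpace M] [Zero M] {p : ℂ → M}
    (h1 : ContinuousOn p U) (h2 : ∀ z ∉ K, p z = 0) : Continuous p := by
  rw [continuous_iff_continuousAt]
  intro z
  by_cases hz : z ∈ U
  · exact h1.continuousAt (hU.mem_nhds hz)
  · have hzK : z ∉ K := fun h => hz (hKU h)
    exact ContinuousAt.congr continuousAt_const ((zero_nhds hK h2 hzK).symm)

private lemma contdiff_glue {U K : Set ℂ} (hU : IsOpen U) (hK : IsClosed K) (hKU : K ⊆ U)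
    {p : ℂ → ℂ} (h1 : ∀ z ∈ U, ContDiffAt ℝ 1 p z) (h2 : ∀ z ∉ K, p z = 0) :
    ContDiff ℝ 1 p := by
  rw [contDiff_iff_contDiffAt]
  intro z
  by_cases hz : z ∈ U
  · exact h1 z hz
  · have hzK : z ∉ K := fun h => hz (hKU h)
    exact (contDiffAt_const (c := (0:ℂ))).congr_of_eventuallyEq (zero_nhds hK h2 hzK)

private lemma fderiv_zero_outside {K : Set ℂ} (hK : IsClosed K)
    {p : ℂ → ℂ} (h2 : ∀ z ∉ K, p z = 0) {z : ℂ} (hz : z ∉ K) :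
    fderiv ℝ p z = 0 := by
  rw [(zero_nhds hK h2 hz).fderiv_eq]
  exact fderiv_const_apply 0

private lemma fderiv_apply_integrable {g : ℂ → ℂ} (hg : ContDiff ℝ 1 g)
    (hgc : HasCompactSupport g) (v : ℂ) :
    Integrable (fun z => fderiv ℝ g z v) := by
  have hfd : Continuous fun z => fderiv ℝ g z v :=
    (ContinuousLinearMap.apply ℝ ℂ v).continuous.comp (hg.continuous_fderiv one_ne_zero)
  have hsupp : HasCompactSupport fun z => fderiv ℝ g z v := by
    apply HasCompactSupport.intro hgc
    intro x hx
    rw [fderiv_zero_outside (isClosed_tsupport g)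
      (fun z hz => image_eq_zero_of_notMem_tsupport hz) hx]
    rfl
  exact hfd.integrable_of_hasCompactSupport hsupp

private lemma integral_fderiv_apply_eq_zero {g : ℂ → ℂ} (hg : ContDiff ℝ 1 g)
    (hgc : HasCompactSupport g) (v : ℂ) : ∫ z, fderiv ℝ g z v = 0 := by
  have key := integral_mul_fderiv_eq_neg_fderiv_mul_of_integrable
    (μ := volume) (f := fun _ => (1:ℂ)) (g := g) (v := v)
    (by simpa [fderiv_fun_const] using (integrable_zero ℂ ℂ (volume : Measure ℂ)))
    (by simpa using fderiv_apply_integrable hg hgc v)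
    (by simpa using hg.continuous.integrable_of_hasCompactSupport hgc)
    (fun x _ => differentiableAt_const _) (fun x _ => hg.differentiable one_ne_zero x)
  simpa [fderiv_fun_const] using key

theorem stmt9 (U : Set ℂ) (hU : IsOpen U) (f : ℂ → ℝ) (hf : ContDiffOn ℝ (⊤ : ℕ∞) f U)
    (n : ℕ) (hn : 1 ≤ n)
    (hineq : ∀ z ∈ U, (n : ℝ) * ‖wzbar (cx f) z‖ ^ 2 + (lap (cx f) z).re ≤ 0)
    (χ : ℂ → ℝ) (hχ : ContDiff ℝ (⊤ : ℕ∞) χ) (hχc : HasCompactSupport χ)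
    (hχU : tsupport χ ⊆ U) :
    (n : ℝ) ^ 2 * ∫ z in U, χ z ^ 2 * ‖wzbar (cx f) z‖ ^ 2
      ≤ 4 * ∫ z in U, ‖wz (cx χ) z‖ ^ 2 := by
  classical
  have hn' : (1:ℝ) ≤ (n:ℝ) := by exact_mod_cast hn
  set K := tsupport χ with hKdef
  have hK : IsCompact K := hχc
  have hKc : IsClosed K := isClosed_tsupport χ
  have hχ0 : ∀ z ∉ K, χ z = 0 := fun z hz => image_eq_zero_of_notMem_tsupport hz
  have hφ0 : ∀ z ∉ K, cx χ z = 0 := fun z hz => by simp [cx, hχ0 z hz]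
  -- smoothness of cx f on U
  have hF : ContDiffOn ℝ (1+1) (cx f) U := by
    have h2 : ContDiffOn ℝ (1+1) f U := hf.of_le (WithTop.coe_le_coe.mpr le_top)
    exact (Complex.ofRealCLM.contDiff.comp_contDiffOn h2 : ContDiffOn ℝ (1+1) _ U)
  have hdF : ContDiffOn ℝ 1 (fderiv ℝ (cx f)) U := hF.fderiv_of_isOpen hU le_rfl
  -- the z̄-derivative of cx f, smooth of class C¹ on U
  have ha : ContDiffOn ℝ 1 (fun z => wzbar (cx f) z) U := by
    have h1 : ContDiffOn ℝ 1 (fun z => fderiv ℝ (cx f) z 1) U :=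
      hdF.clm_apply contDiffOn_const
    have hI : ContDiffOn ℝ 1 (fun z => fderiv ℝ (cx f) z Complex.I) U :=
      hdF.clm_apply contDiffOn_const
    have := (h1.add ((contDiffOn_const (c := Complex.I)).mul hI)).div_const (c := (2:ℂ))
    simpa [wzbar, pdx, pdy] using this
  have hacont : ContinuousOn (fun z => wzbar (cx f) z) U := ha.continuousOn
  have hda : ContDiffOn ℝ 0 (fderiv ℝ (fun z => wzbar (cx f) z)) U :=
    ha.fderiv_of_isOpen hU (by simp)
  have hlapcont : ContinuousOn (fun z => lap (cx f) z) U := by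
    have h1 : ContDiffOn ℝ 0 (fun z => fderiv ℝ (fun w => wzbar (cx f) w) z 1) U :=
      hda.clm_apply contDiffOn_const
    have hI : ContDiffOn ℝ 0 (fun z => fderiv ℝ (fun w => wzbar (cx f) w) z Complex.I) U :=
      hda.clm_apply contDiffOn_const
    have := ((h1.sub ((contDiffOn_const (c := Complex.I)).mul hI)).div_const (c := (2:ℂ)))
    rw [contDiffOn_zero] at this
    simpa [lap, wz, pdx, pdy] using this
  -- χ as complex function
  have hφ1 : ContDiff ℝ 1 (cx χ) := by
    have h2 : ContDiff ℝ 1 χ := hχ.of_le (by simp)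
    exact (Complex.ofRealCLM.contDiff.comp h2 : ContDiff ℝ 1 _)
  have hwzφcont : Continuous (fun z => wz (cx χ) z) := by
    have h := hφ1.continuous_fderiv one_ne_zero
    have h1 : Continuous fun z => fderiv ℝ (cx χ) z 1 :=
      (ContinuousLinearMap.apply ℝ ℂ (1:ℂ)).continuous.comp h
    have hI : Continuous fun z => fderiv ℝ (cx χ) z Complex.I :=
      (ContinuousLinearMap.apply ℝ ℂ Complex.I).continuous.comp h
    have := ((h1.sub ((continuous_const (y := Complex.I)).mul hI)).div_const (2:ℂ))
    simpa [wz, pdx, pdy] using this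
  have hwzφ0 : ∀ z ∉ K, wz (cx χ) z = 0 := by
    intro z hz
    rw [wz, pdx, pdy, fderiv_zero_outside hKc hφ0 hz]
    simp
  -- the function g = χ² ∂̄f
  set g : ℂ → ℂ := fun z => cx χ z * cx χ z * wzbar (cx f) z with hgdef
  have hg0 : ∀ z ∉ K, g z = 0 := fun z hz => by simp [hgdef, hφ0 z hz]
  have hgc : HasCompactSupport g := HasCompactSupport.intro hK hg0
  have hg1 : ContDiff ℝ 1 g :=
    contdiff_glue hU hKc hχU
      (fun z hz => (hφ1.contDiffAt.mul hφ1.contDiffAt).mul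
        (ha.contDiffAt (hU.mem_nhds hz))) hg0
  -- product rule on U
  have hgderiv : ∀ z ∈ U, wz g z =
      2 * cx χ z * wz (cx χ) z * wzbar (cx f) z + cx χ z * cx χ z * lap (cx f) z := by
    intro z hz
    have haz : DifferentiableAt ℝ (fun w => wzbar (cx f) w) z :=
      (ha.contDiffAt (hU.mem_nhds hz)).differentiableAt one_ne_zero
    have hφz : DifferentiableAt ℝ (cx χ) z := hφ1.differentiable one_ne_zero z
    have hφφ : DifferentiableAt ℝ (fun w => cx χ w * cx χ w) z := hφz.mul hφz
    have e1 : fderiv ℝ g z = (cx χ z * cx χ z) • fderiv ℝ (fun w => wzbar (cx f) w) z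
        + wzbar (cx f) z • fderiv ℝ (fun w => cx χ w * cx χ w) z := fderiv_fun_mul hφφ haz
    have e2 : fderiv ℝ (fun w => cx χ w * cx χ w) z
        = cx χ z • fderiv ℝ (cx χ) z + cx χ z • fderiv ℝ (cx χ) z := fderiv_fun_mul hφz hφz
    simp only [wz, pdx, pdy, lap]
    rw [e1, e2]
    simp only [ContinuousLinearMap.add_apply, ContinuousLinearMap.smul_apply, smul_eq_mul]
    ring
  -- wz g outside K and globally
  have hwzg0 : ∀ z ∉ K, wz g z = 0 := by
    intro z hz
    rw [wz, pdx, pdy, fderiv_zero_outside hKc hg0 hz]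
    simp
  have hwzg_cont : Continuous (fun z => wz g z) := by
    have h := hg1.continuous_fderiv one_ne_zero
    have h1 : Continuous fun z => fderiv ℝ g z 1 :=
      (ContinuousLinearMap.apply ℝ ℂ (1:ℂ)).continuous.comp h
    have hI : Continuous fun z => fderiv ℝ g z Complex.I :=
      (ContinuousLinearMap.apply ℝ ℂ Complex.I).continuous.comp h
    have := ((h1.sub ((continuous_const (y := Complex.I)).mul hI)).div_const (2:ℂ))
    simpa [wz, pdx, pdy] using this
  have hwzg_int : Integrable (fun z => wz g z) :=
    hwzg_cont.integrable_of_hasCompactSupport (HasCompactSupport.intro hK hwzg0)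
  -- integration by parts : ∫ wz g = 0
  have hIBP : ∫ z, wz g z = 0 := by
    have h1 := integral_fderiv_apply_eq_zero hg1 hgc 1
    have hI := integral_fderiv_apply_eq_zero hg1 hgc Complex.I
    have hrw : (fun z => wz g z)
        = fun z => (2⁻¹ : ℂ) * fderiv ℝ g z 1 - (Complex.I/2) * fderiv ℝ g z Complex.I := by
      funext z; rw [wz, pdx, pdy]; ring
    rw [hrw, integral_sub ((fderiv_apply_integrable hg1 hgc 1).const_mul _)
        ((fderiv_apply_integrable hg1 hgc Complex.I).const_mul _),
      integral_const_mul, integral_const_mul, h1, hI]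
    ring
  have hre : ∫ z, (wz g z).re = 0 := by
    have h := integral_re hwzg_int
    simp only [RCLike.re_to_complex] at h
    rw [h, hIBP]
    simp
  -- the four real functions
  set P : ℂ → ℝ := fun z => χ z ^ 2 * (‖wzbar (cx f) z‖) ^ 2 with hPdef
  set Q : ℂ → ℝ := fun z => (‖wz (cx χ) z‖) ^ 2 with hQdef
  set R : ℂ → ℝ := fun z => χ z ^ 2 * (lap (cx f) z).re with hRdef
  set S : ℂ → ℝ := fun z => (2 * cx χ z * wz (cx χ) z * wzbar (cx f) z).re with hSdef
  have hP0 : ∀ z ∉ K, P z = 0 := fun z hz => by simp [hPdef, hχ0 z hz]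
  have hQ0 : ∀ z ∉ K, Q z = 0 := fun z hz => by simp [hQdef, hwzφ0 z hz]
  have hR0 : ∀ z ∉ K, R z = 0 := fun z hz => by simp [hRdef, hχ0 z hz]
  have hS0 : ∀ z ∉ K, S z = 0 := fun z hz => by simp [hSdef, hφ0 z hz]
  have hPcont : Continuous P :=
    cont_glue hU hKc hχU
      (((hχ.continuous.pow 2).continuousOn).mul
        ((continuous_norm.comp_continuousOn hacont).pow 2)) hP0
  have hQcont : Continuous Q := (continuous_norm.comp hwzφcont).pow 2
  have hRcont : Continuous R :=
    cont_glue hU hKc hχU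
      (((hχ.continuous.pow 2).continuousOn).mul
        (Complex.continuous_re.comp_continuousOn hlapcont)) hR0
  have hScont : Continuous S :=
    cont_glue hU hKc hχU
      (Complex.continuous_re.comp_continuousOn
        ((((continuous_const.mul (Complex.continuous_ofReal.comp hχ.continuous)).mul
          hwzφcont).continuousOn).mul hacont)) hS0
  have hPint : Integrable P := hPcont.integrable_of_hasCompactSupport
    (HasCompactSupport.intro hK hP0)
  have hQint : Integrable Q := hQcont.integrable_of_hasCompactSupport
    (HasCompactSupport.intro hK hQ0)
  have hRint : Integrable R := hRcont.integrable_of_hasCompactSupport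
    (HasCompactSupport.intro hK hR0)
  have hSint : Integrable S := hScont.integrable_of_hasCompactSupport
    (HasCompactSupport.intro hK hS0)
  -- pointwise : R + S = Re (wz g)
  have hRS : ∀ z, R z + S z = (wz g z).re := by
    intro z
    by_cases hz : z ∈ U
    · have hφz : cx χ z * cx χ z = ((χ z ^ 2 : ℝ) : ℂ) := by
        simp only [cx, Complex.ofReal_pow]; ring
      rw [hgderiv z hz, Complex.add_re, hφz, Complex.re_ofReal_mul]
      simp only [hRdef, hSdef]
      ring
    · have hzK : z ∉ K := fun h => hz (hχU h)
      rw [hR0 z hzK, hS0 z hzK, hwzg0 z hzK]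
      simp
  have h0 : (∫ z, R z) + (∫ z, S z) = 0 := by
    rw [← integral_add hRint hSint]
    rw [show (fun z => R z + S z) = fun z => (wz g z).re from funext hRS]
    exact hre
  -- pointwise inequality 1 : n P ≤ -R
  have hpt1 : ∀ z, (n:ℝ) * P z ≤ -R z := by
    intro z
    by_cases hz : z ∈ U
    · have h := hineq z hz
      simp only [hPdef, hRdef]
      nlinarith [mul_le_mul_of_nonneg_left h (sq_nonneg (χ z))]
    · have hzK : z ∉ K := fun h => hz (hχU h)
      rw [hP0 z hzK, hR0 z hzK]
      simp
  -- pointwise inequality 2 : 2 n S ≤ n² P + 4 Q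
  have hpt2 : ∀ z, 2 * (n:ℝ) * S z ≤ (n:ℝ)^2 * P z + 4 * Q z := by
    intro z
    have habs : S z ≤ 2 * |χ z| * ‖wz (cx χ) z‖ * ‖wzbar (cx f) z‖ := by
      simp only [hSdef]
      calc (2 * cx χ z * wz (cx χ) z * wzbar (cx f) z).re
          ≤ ‖2 * cx χ z * wz (cx χ) z * wzbar (cx f) z‖ := Complex.re_le_norm _
        _ = 2 * |χ z| * ‖wz (cx χ) z‖ * ‖wzbar (cx f) z‖ := by
            simp [norm_mul, cx]
    simp only [hPdef, hQdef]
    rw [← sq_abs (χ z)]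
    nlinarith [sq_nonneg ((n:ℝ) * (|χ z| * ‖wzbar (cx f) z‖)
        - 2 * ‖wz (cx χ) z‖),
      mul_le_mul_of_nonneg_left habs (show (0:ℝ) ≤ 2 * (n:ℝ) by positivity),
      abs_nonneg (χ z), norm_nonneg (wz (cx χ) z),
      norm_nonneg (wzbar (cx f) z), hn']
  -- integrate
  have hint1 : (n:ℝ) * (∫ z, P z) ≤ -(∫ z, R z) := by
    rw [← integral_const_mul, ← integral_neg]
    exact integral_mono (hPint.const_mul _) hRint.neg (fun z => hpt1 z)
  have hint2 : 2 * (n:ℝ) * (∫ z, S z) ≤ (n:ℝ)^2 * (∫ z, P z) + 4 * (∫ z, Q z) := by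
    rw [← integral_const_mul, ← integral_const_mul, ← integral_const_mul,
      ← integral_add ((hPint.const_mul _)) ((hQint.const_mul _))]
    exact integral_mono (hSint.const_mul _)
      ((hPint.const_mul _).add (hQint.const_mul _)) (fun z => hpt2 z)
  have hPnn : 0 ≤ ∫ z, P z := integral_nonneg (fun z => by rw [hPdef]; positivity)
  -- conclude for the full-space integrals
  have hmain : (n:ℝ)^2 * (∫ z, P z) ≤ 4 * (∫ z, Q z) := by
    have hIS : -(∫ z, R z) = ∫ z, S z := by linarith [h0]
    have hmul := mul_le_mul_of_nonneg_left hint1 (show (0:ℝ) ≤ 2 * (n:ℝ) by positivity)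
    rw [hIS] at hmul
    nlinarith [hPnn, hn', hmul, hint2]
  -- convert set integrals
  have hPset : ∫ z in U, P z = ∫ z, P z :=
    setIntegral_eq_integral_of_forall_compl_eq_zero
      (fun z hz => hP0 z (fun h => hz (hχU h)))
  have hQset : ∫ z in U, Q z = ∫ z, Q z :=
    setIntegral_eq_integral_of_forall_compl_eq_zero
      (fun z hz => hQ0 z (fun h => hz (hχU h)))
  calc (n : ℝ) ^ 2 * ∫ z in U, χ z ^ 2 * (‖wzbar (cx f) z‖) ^ 2
      = (n:ℝ)^2 * ∫ z, P z := by rw [← hPset]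
    _ ≤ 4 * ∫ z, Q z := hmain
    _ = 4 * ∫ z in U, (‖wz (cx χ) z‖) ^ 2 := by rw [← hQset]
end

section
/- Let $D \subseteq \mathbb{C}$ be open and connected, $f_n : D \to \mathbb{R}$ smooth with $n |\partial f_n/\partial \bar z|^2 + \partial^2 f_n/\partial z \partial \bar z \le 0$ for each positive integer $n$. Then for every compact $K \subset D$ of finite Lebesgue measure, $\int_K |\partial f_n/\partial \bar z|\, dA \to 0$ as $n \to \infty$. -/
open MeasureTheory Filter

section Aux
open Set Manifold ContDiff

lemma one_le_inf : (∞ : WithTop ℕ∞) ≠ 0 := by simp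

/-- Continuity of directional derivative. -/
lemma fd_cont {G : ℂ → ℂ} (hG : ContDiff ℝ ∞ G) (v : ℂ) :
    Continuous fun z => fderiv ℝ G z v :=
  (hG.continuous_fderiv_apply one_le_inf).comp (continuous_id.prodMk continuous_const)

lemma fd_supp {G : ℂ → ℂ} (hGc : HasCompactSupport G) (v : ℂ) :
    HasCompactSupport fun z => fderiv ℝ G z v :=
  ((hGc.fderiv (𝕜 := ℝ)).comp_left (g := fun L : ℂ →L[ℝ] ℂ => L v) rfl)

lemma fd_int {G : ℂ → ℂ} (hG : ContDiff ℝ ∞ G) (hGc : HasCompactSupport G) (v : ℂ) :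
    Integrable (fun z => fderiv ℝ G z v) volume :=
  (fd_cont hG v).integrable_of_hasCompactSupport (fd_supp hGc v)

/-- Integral of a directional derivative of a smooth compactly supported function vanishes. -/
lemma my_ibp {G : ℂ → ℂ} (hG : ContDiff ℝ ∞ G) (hGc : HasCompactSupport G) (v : ℂ) :
    ∫ z, fderiv ℝ G z v = 0 := by
  have h := integral_mul_fderiv_eq_neg_fderiv_mul_of_integrable
      (μ := volume) (f := fun _ : ℂ => (1:ℂ)) (g := G) (v := v)
      (by simpa [fderiv_fun_const] using (integrable_zero ℂ ℂ volume))
      (by simpa using fd_int hG hGc v)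
      (by simpa using hG.continuous.integrable_of_hasCompactSupport hGc)
      (fun x _ => differentiableAt_const 1) (fun x _ => hG.differentiable one_le_inf x)
  simpa [fderiv_fun_const] using h

/-- A function smooth on an open set and vanishing outside a closed subset is globally smooth. -/
lemma my_ext {u : ℂ → ℂ} {D s : Set ℂ} (hD : IsOpen D) (hu : ContDiffOn ℝ ∞ u D)
    (hs : IsClosed s) (hsD : s ⊆ D) (hvan : ∀ z ∉ s, u z = 0) : ContDiff ℝ ∞ u := by
  rw [contDiff_iff_contDiffAt]
  intro z
  by_cases hz : z ∈ D
  · exact hu.contDiffAt (hD.mem_nhds hz)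
  · have hzs : z ∈ sᶜ := fun h => hz (hsD h)
    exact contDiffAt_const.congr_of_eventuallyEq
      (Filter.eventuallyEq_of_mem (hs.isOpen_compl.mem_nhds hzs) fun w hw => hvan w hw)

/-- Smooth cutoff: 1 on K, supported in a compact subset of D. -/
lemma my_cutoff {K D : Set ℂ} (hK : IsCompact K) (hD : IsOpen D) (hKD : K ⊆ D) :
    ∃ (ψ : ℂ → ℝ) (L : Set ℂ), IsCompact L ∧ L ⊆ D ∧ ContDiff ℝ ∞ ψ ∧
      (∀ z ∈ K, ψ z = 1) ∧ (∀ z, ψ z ∈ Icc (0:ℝ) 1) ∧ (∀ z ∉ L, ψ z = 0) := by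
  obtain ⟨L, hLc, hKL, hLD⟩ := exists_compact_between hK hD hKD
  obtain ⟨φ, hφ0, hφ1, hφmem⟩ := exists_contMDiffMap_zero_one_of_isClosed 𝓘(ℝ, ℂ) (n := (⊤ : ℕ∞))
    (isOpen_interior (s := L)).isClosed_compl hK.isClosed
    (disjoint_compl_left_iff_subset.mpr hKL)
  refine ⟨φ, L, hLc, hLD, ?_, fun z hz => hφ1 hz, hφmem,
    fun z hz => hφ0 fun h => hz (interior_subset h)⟩
  exact contMDiff_iff_contDiff.mp φ.contMDiff

/-- Cauchy–Schwarz for a finite measure. -/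
lemma my_cs {μ : Measure ℂ} [IsFiniteMeasure μ] {h : ℂ → ℂ} (hm : MemLp h 2 μ) :
    ∫ z, ‖h z‖ ∂μ ≤ Real.sqrt (∫ z, ‖h z‖ ^ 2 ∂μ) * Real.sqrt (μ Set.univ).toReal := by
  have hpq : Real.HolderConjugate 2 2 := Real.HolderConjugate.two_two
  have h2 : ENNReal.ofReal (2:ℝ) = 2 := by
    rw [ENNReal.ofReal_ofNat]
  have hg : MemLp (fun _ : ℂ => (1:ℂ)) (ENNReal.ofReal (2:ℝ)) μ := by
    rw [h2]; exact memLp_const 1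
  have key := integral_mul_norm_le_Lp_mul_Lq hpq (h2 ▸ hm) hg
  simp only [norm_one, mul_one, Real.one_rpow] at key
  have e1 : ∀ x : ℂ, ‖h x‖ ^ (2:ℝ) = ‖h x‖ ^ 2 := fun x => by
    rw [show (2:ℝ) = ((2:ℕ):ℝ) by norm_num, Real.rpow_natCast]
  simp only [e1] at key
  have e2 : ∫ _ : ℂ, (1:ℝ) ∂μ = (μ Set.univ).toReal := by simp [Measure.real]
  rw [e2] at key
  have hnn : 0 ≤ ∫ z, ‖h z‖ ^ 2 ∂μ := integral_nonneg fun z => by positivity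
  calc ∫ z, ‖h z‖ ∂μ ≤ (∫ z, ‖h z‖ ^ 2 ∂μ) ^ (1/2:ℝ) * (μ Set.univ).toReal ^ (1/2:ℝ) := key
    _ = _ := by rw [← Real.sqrt_eq_rpow, ← Real.sqrt_eq_rpow]

end Aux

open scoped ContDiff

theorem stmt14 (D : Set ℂ) (hD : IsOpen D) (hDc : IsConnected D)
    (f : ℕ → ℂ → ℝ) (hf : ∀ n, ContDiffOn ℝ (⊤ : ℕ∞) (f n) D)
    (hineq : ∀ n : ℕ, 1 ≤ n → ∀ z ∈ D,
      (n : ℝ) * ‖wzbar (cx (f n)) z‖ ^ 2 + (lap (cx (f n)) z).re ≤ 0) :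
    ∀ K : Set ℂ, IsCompact K → K ⊆ D → volume K < ⊤ →
      Tendsto (fun n => ∫ z in K, ‖wzbar (cx (f n)) z‖) atTop (nhds 0) := by
  intro K hK hKD hKvol
  obtain ⟨ψ, L, hLc, hLD, hψs, hψK, hψmem, hψL⟩ := my_cutoff hK hD hKD
  set χ : ℂ → ℂ := fun z => ((ψ z : ℝ) : ℂ) with hχdef
  have hχs : ContDiff ℝ ∞ χ := Complex.ofRealCLM.contDiff.comp hψs
  have hχL : ∀ z ∉ L, χ z = 0 := fun z hz => by simp [hχdef, hψL z hz]
  have hχK : ∀ z ∈ K, χ z = 1 := fun z hz => by simp [hχdef, hψK z hz]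
  have hχc : HasCompactSupport χ := HasCompactSupport.intro hLc hχL
  -- bound on wz χ
  have hwzχ_cont : Continuous (fun z => wz χ z) := by
    simp only [wz, pdx, pdy]
    exact (((fd_cont hχs 1).sub (continuous_const.mul (fd_cont hχs Complex.I))).div_const 2)
  have hwzχ_supp : HasCompactSupport (fun z => wz χ z) := by
    apply HasCompactSupport.intro (hχc.fderiv (𝕜 := ℝ))
    intro z hz
    have h0 : fderiv ℝ χ z = 0 := by
      by_contra hne
      exact hz (subset_tsupport _ hne)
    simp [wz, pdx, pdy, h0]
  obtain ⟨C, hC⟩ := hwzχ_supp.exists_bound_of_continuous hwzχ_cont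
  have hC0 : 0 ≤ C := le_trans (norm_nonneg _) (hC 0)
  set M : ℝ := (volume L).toReal with hMdef
  have hM0 : 0 ≤ M := ENNReal.toReal_nonneg
  set B : ℝ := 2 * C * Real.sqrt M with hBdef
  have hB0 : 0 ≤ B := by positivity
  set vK : ℝ := Real.sqrt (volume K).toReal with hvKdef
  have hvK0 : 0 ≤ vK := Real.sqrt_nonneg _
  -- the key quantitative estimate
  have key : ∀ n : ℕ, 1 ≤ n →
      ∫ z in K, ‖wzbar (cx (f n)) z‖ ≤ B * vK / n := by
    intro n hn
    have hn0 : (0:ℝ) < n := by exact_mod_cast hn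
    set u : ℂ → ℂ := cx (f n) with hudef
    have hu : ContDiffOn ℝ ∞ u D := by
      exact Complex.ofRealCLM.contDiff.comp_contDiffOn ((hf n).of_le (by simp))
    set W : ℂ → ℂ := fun z => wzbar u z with hWdef
    -- smoothness of W on D
    have hfdOn : ContDiffOn ℝ ∞ (fderiv ℝ u) D :=
      ((contDiffOn_infty_iff_fderiv_of_isOpen hD).mp hu).2
    have hfdv : ∀ v : ℂ, ContDiffOn ℝ ∞ (fun z => fderiv ℝ u z v) D :=
      fun v => hfdOn.clm_apply contDiffOn_const
    have hW : ContDiffOn ℝ ∞ W D := by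
      simp only [hWdef, wzbar, pdx, pdy]
      exact ((hfdv 1).add (contDiffOn_const.mul (hfdv Complex.I))).div_const 2
    set h : ℂ → ℂ := fun z => χ z * W z with hhdef
    have hhL : ∀ z ∉ L, h z = 0 := fun z hz => by simp [hhdef, hχL z hz]
    have hh : ContDiff ℝ ∞ h := my_ext hD (hχs.contDiffOn.mul hW) hLc.isClosed hLD hhL
    have hhc : HasCompactSupport h := HasCompactSupport.intro hLc hhL
    set g : ℂ → ℂ := fun z => χ z * h z with hgdef
    have hg : ContDiff ℝ ∞ g := hχs.mul hh
    have hgc : HasCompactSupport g :=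
      HasCompactSupport.intro hLc fun z hz => by simp [hgdef, hχL z hz]
    set q : ℂ → ℂ := fun z => 2 * wz χ z * h z with hqdef
    set p : ℂ → ℂ := fun z => χ z ^ 2 * lap u z with hpdef
    -- the pointwise identity wz g = p + q
    have hid : ∀ z, wz g z = p z + q z := by
      intro z
      by_cases hz : z ∈ D
      · have dχ : DifferentiableAt ℝ χ z := (hχs.differentiable one_le_inf) z
        have dW : DifferentiableAt ℝ W z :=
          (hW.contDiffAt (hD.mem_nhds hz)).differentiableAt one_le_inf
        have dh : DifferentiableAt ℝ h z := dχ.mul dW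
        have e1 : ∀ v : ℂ, fderiv ℝ h z v
            = χ z * fderiv ℝ W z v + W z * fderiv ℝ χ z v := by
          intro v
          rw [hhdef, fderiv_fun_mul dχ dW]
          simp [smul_eq_mul]
        have e2 : ∀ v : ℂ, fderiv ℝ g z v
            = χ z * fderiv ℝ h z v + h z * fderiv ℝ χ z v := by
          intro v
          rw [hgdef, fderiv_fun_mul dχ dh]
          simp [smul_eq_mul]
        have e3 : lap u z = (fderiv ℝ W z 1 - Complex.I * fderiv ℝ W z Complex.I) / 2 := rfl
        simp only [wz, pdx, pdy, hpdef, hqdef, e1, e2, e3]; simp only [hhdef]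
        ring
      · have hzL : z ∉ L := fun h => hz (hLD h)
        have hgz : g =ᶠ[nhds z] 0 := by
          apply Filter.eventuallyEq_of_mem (hLc.isClosed.isOpen_compl.mem_nhds hzL)
          intro w hw
          simp [hgdef, hχL w hw]
        have h0 : fderiv ℝ g z = 0 := by
          rw [hgz.fderiv_eq]; exact fderiv_const_apply 0
        simp [wz, pdx, pdy, h0, hpdef, hqdef, hχL z hzL, hhL z hzL]
    -- continuity and integrability
    have hq_cont : Continuous q := (continuous_const.mul hwzχ_cont).mul hh.continuous
    have hq_supp : HasCompactSupport q :=
      HasCompactSupport.intro hLc fun z hz => by simp [hqdef, hhL z hz]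
    have hq_int : Integrable q volume := hq_cont.integrable_of_hasCompactSupport hq_supp
    have hwzg_cont : Continuous (fun z => wz g z) := by
      simp only [wz, pdx, pdy]
      exact ((fd_cont hg 1).sub (continuous_const.mul (fd_cont hg Complex.I))).div_const 2
    have hp_cont : Continuous p := by
      have : p = fun z => wz g z - q z := by
        funext z; rw [hid z]; ring
      rw [this]
      exact hwzg_cont.sub hq_cont
    have hp_supp : HasCompactSupport p :=
      HasCompactSupport.intro hLc fun z hz => by simp [hpdef, hχL z hz]
    have hp_int : Integrable p volume := hp_cont.integrable_of_hasCompactSupport hp_supp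
    -- ∫ wz g = 0
    have hI0 : ∫ z, wz g z = 0 := by
      have h1 := my_ibp hg hgc 1
      have h2 := my_ibp hg hgc Complex.I
      have : (fun z => wz g z)
          = fun z => (fderiv ℝ g z 1 - Complex.I * fderiv ℝ g z Complex.I) / 2 := rfl
      rw [this]
      rw [integral_div, integral_sub (fd_int hg hgc 1) ((fd_int hg hgc Complex.I).const_mul _),
        integral_const_mul, h1, h2]
      simp
    have hpq : ∫ z, p z = - ∫ z, q z := by
      have : ∫ z, (p z + q z) = 0 := by
        rw [← hI0]; exact integral_congr_ae (Filter.Eventually.of_forall fun z => (hid z).symm)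
      rw [integral_add hp_int hq_int] at this
      linear_combination this
    -- real parts
    have hh2_cont : Continuous fun z => ‖h z‖ ^ 2 := (hh.continuous.norm).pow 2
    have hh2_int : Integrable (fun z => ‖h z‖ ^ 2) volume :=
      hh2_cont.integrable_of_hasCompactSupport
        (HasCompactSupport.intro hLc fun z hz => by simp [hhL z hz])
    have hh_int : Integrable (fun z => ‖h z‖) volume :=
      hh.continuous.norm.integrable_of_hasCompactSupport
        (HasCompactSupport.intro hLc fun z hz => by simp [hhL z hz])
    set a : ℝ := ∫ z, ‖h z‖ ^ 2 with hadef
    have ha0 : 0 ≤ a := integral_nonneg fun z => by positivity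
    -- pointwise inequality
    have hpoint : ∀ z, (n:ℝ) * ‖h z‖ ^ 2 + (p z).re ≤ 0 := by
      intro z
      by_cases hz : z ∈ D
      · have hre : (p z).re = ψ z ^ 2 * (lap u z).re := by
          have : p z = ((ψ z ^ 2 : ℝ) : ℂ) * lap u z := by
            simp [hpdef, hχdef]
          rw [this, Complex.re_ofReal_mul]
        have hnh : ‖h z‖ ^ 2 = ψ z ^ 2 * ‖W z‖ ^ 2 := by
          have hn1 : ‖h z‖ = |ψ z| * ‖W z‖ := by
            simp [hhdef, hχdef, norm_mul, Complex.norm_real]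
          rw [hn1, mul_pow, sq_abs]
        have hzin := hineq n hn z hz
        rw [hre, hnh]
        nlinarith [sq_nonneg (ψ z), sq_nonneg (‖W z‖)]
      · have hzL : z ∉ L := fun hh' => hz (hLD hh')
        simp [hhL z hzL, hpdef, hχL z hzL]
    have hsum : (n:ℝ) * a + ∫ z, (p z).re ≤ 0 := by
      have h0 : ∫ z, ((n:ℝ) * ‖h z‖ ^ 2 + (p z).re) ≤ 0 :=
        integral_nonpos hpoint
      have hpre_int : Integrable (fun z => (p z).re) volume := by
        simpa using hp_int.re
      rwa [integral_add (hh2_int.const_mul _) hpre_int, integral_const_mul] at h0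
    have hre_int : ∫ z, (p z).re = (∫ z, p z).re := by
      have := integral_re hp_int (𝕜 := ℂ)
      simpa using this
    -- n * a ≤ ∫ ‖q‖
    have hna : (n:ℝ) * a ≤ ∫ z, ‖q z‖ := by
      have h1 : (n:ℝ) * a ≤ - (∫ z, p z).re := by
        rw [← hre_int]; linarith
      have h2 : - (∫ z, p z).re = (∫ z, q z).re := by
        rw [hpq]; simp
      have h3 : (∫ z, q z).re ≤ ‖∫ z, q z‖ := Complex.re_le_norm _
      have h4 : ‖∫ z, q z‖ ≤ ∫ z, ‖q z‖ := norm_integral_le_integral_norm _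
      linarith
    -- ∫ ‖q‖ ≤ 2C ∫ ‖h‖
    have hq_bound : ∫ z, ‖q z‖ ≤ 2 * C * ∫ z, ‖h z‖ := by
      rw [← integral_const_mul]
      apply integral_mono hq_int.norm (hh_int.const_mul _)
      intro z
      show ‖q z‖ ≤ 2 * C * ‖h z‖
      have hqz : ‖q z‖ = 2 * ‖wz χ z‖ * ‖h z‖ := by
        simp [hqdef, norm_mul]
      rw [hqz]
      have := hC z
      nlinarith [norm_nonneg (h z), norm_nonneg (wz χ z)]
    -- Cauchy–Schwarz over L
    haveI : Fact (volume L < ⊤) := ⟨hLc.measure_lt_top⟩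
    have hmem2 : MemLp h 2 volume := hh.continuous.memLp_of_hasCompactSupport hhc
    have hcsL : ∫ z, ‖h z‖ ≤ Real.sqrt a * Real.sqrt M := by
      have heq : ∫ z in L, ‖h z‖ = ∫ z, ‖h z‖ :=
        setIntegral_eq_integral_of_forall_compl_eq_zero fun z hz => by simp [hhL z hz]
      have hcs := my_cs (hmem2.restrict L)
      rw [Measure.restrict_apply_univ] at hcs
      have hle : ∫ z in L, ‖h z‖ ^ 2 ≤ a :=
        setIntegral_le_integral hh2_int (Filter.Eventually.of_forall fun z => by positivity)
      calc ∫ z, ‖h z‖ = ∫ z in L, ‖h z‖ := heq.symm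
        _ ≤ Real.sqrt (∫ z in L, ‖h z‖ ^ 2) * Real.sqrt (volume L).toReal := hcs
        _ ≤ Real.sqrt a * Real.sqrt M :=
            mul_le_mul_of_nonneg_right (Real.sqrt_le_sqrt hle) (Real.sqrt_nonneg _)
    -- combine: n * a ≤ B * sqrt a
    have hcomb : (n:ℝ) * a ≤ B * Real.sqrt a := by
      have h5 : ∫ z, ‖h z‖ ≥ 0 := integral_nonneg fun z => norm_nonneg _
      calc (n:ℝ) * a ≤ ∫ z, ‖q z‖ := hna
        _ ≤ 2 * C * ∫ z, ‖h z‖ := hq_bound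
        _ ≤ 2 * C * (Real.sqrt a * Real.sqrt M) := by
            apply mul_le_mul_of_nonneg_left hcsL (by positivity)
        _ = B * Real.sqrt a := by rw [hBdef]; ring
    have hsqrt : Real.sqrt a ≤ B / n := by
      have hs0 : 0 ≤ Real.sqrt a := Real.sqrt_nonneg a
      have hsq : Real.sqrt a * Real.sqrt a = a := Real.mul_self_sqrt ha0
      rcases eq_or_lt_of_le hs0 with hseq | hslt
      · rw [← hseq]; positivity
      · have hns : (n:ℝ) * Real.sqrt a ≤ B := by
          have : (n:ℝ) * Real.sqrt a * Real.sqrt a ≤ B * Real.sqrt a := by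
            rw [mul_assoc, hsq]; exact hcomb
          exact le_of_mul_le_mul_right this hslt
        rw [le_div_iff₀ hn0]
        linarith [hns]
    -- final Cauchy–Schwarz over K
    haveI : Fact (volume K < ⊤) := ⟨hKvol⟩
    have hKeq : ∫ z in K, ‖wzbar u z‖ = ∫ z in K, ‖h z‖ := by
      apply setIntegral_congr_fun hK.measurableSet
      intro z hz
      simp [hhdef, hχK z hz, hWdef]
    have hcsK := my_cs (hmem2.restrict K)
    rw [Measure.restrict_apply_univ] at hcsK
    have hleK : ∫ z in K, ‖h z‖ ^ 2 ≤ a :=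
      setIntegral_le_integral hh2_int (Filter.Eventually.of_forall fun z => by positivity)
    calc ∫ z in K, ‖wzbar (cx (f n)) z‖ = ∫ z in K, ‖h z‖ := hKeq
      _ ≤ Real.sqrt (∫ z in K, ‖h z‖ ^ 2) * Real.sqrt (volume K).toReal := hcsK
      _ ≤ Real.sqrt a * vK :=
          mul_le_mul_of_nonneg_right (Real.sqrt_le_sqrt hleK) (Real.sqrt_nonneg _)
      _ ≤ (B / n) * vK := mul_le_mul_of_nonneg_right hsqrt hvK0
      _ = B * vK / n := by ring
  -- squeeze
  apply tendsto_of_tendsto_of_tendsto_of_le_of_le' tendsto_const_nhds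
    (tendsto_const_div_atTop_nhds_zero_nat (B * vK))
  · filter_upwards with n
    exact integral_nonneg fun z => norm_nonneg _
  · filter_upwards [eventually_ge_atTop 1] with n hn
    exact key n hn
end
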